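/- Let M be a quantum channel on d×d complex matrices with Kraus operators (K_i). Then for every d×d complex matrix X, ‖M(X)‖₁ ≤ ‖X‖₁. -/

import Mathlib

open Matrix
open scoped ComplexOrder

/-- The trace norm (Schatten 1-norm) of a complex square matrix: `‖A‖₁ = tr √(AᴴA)`. -/
noncomputable def traceNorm {m : Type*} [Fintype m] [DecidableEq m] (A : Matrix m m ℂ) : ℝ :=
  (((Matrix.posSemidef_conjTranspose_mul_self A).1.eigenvectorUnitary : Matrix m m ℂ) *
    diagonal (((↑) : ℝ → ℂ) ∘ (√·) ∘ (Matrix.posSemidef_conjTranspose_mul_self A).1.eigenvalues) *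
    (star (Matrix.posSemidef_conjTranspose_mul_self A).1.eigenvectorUnitary : Matrix m m ℂ)).trace.re

/-!
The trace norm is dual to the operator norm: `‖A‖₁ = max {Re tr (C A) : ‖C‖ ≤ 1}`. The bound
`Re tr (C A) ≤ ∑ σⱼ` comes from writing `tr (C A) = tr ((Vᴴ C) (A V))`, where `V` is a unitary of
eigenvectors of `AᴴA`, so that the columns of `A V` are orthogonal with norms the singular values
`σⱼ`; the maximum is attained at `C = V Σ⁺ Vᴴ Aᴴ`. The dual map `C ↦ ∑ Kᵢᴴ C Kᵢ` of a channel preserves `‖C‖ ≤ 1`, by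
Cauchy–Schwarz and `∑ ‖Kᵢ x‖² = ‖x‖²`. Hence, choosing `C` optimal for `M(X)`,
`‖M(X)‖₁ = Re tr (C M(X)) = Re tr (M*(C) X) ≤ ‖X‖₁`.
-/

open scoped Matrix.Norms.L2Operator
open WithLp

open RCLike in
theorem ContinuousLinearMap.norm_sum_star_mul_mul_le_one {𝕜 E ι : Type*} [RCLike 𝕜]
    [NormedAddCommGroup E] [InnerProductSpace 𝕜 E] [CompleteSpace E] [Fintype ι]
    (T : ι → E →L[𝕜] E) (hT : ∑ i, star (T i) * T i = 1) {c : E →L[𝕜] E} (hc : ‖c‖ ≤ 1) :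
    ‖∑ i, star (T i) * c * T i‖ ≤ 1 := by
  have norm_sq_sum : ∀ x, ∑ i, ‖T i x‖ ^ 2 = ‖x‖ ^ 2 := fun x => by
    have := congrArg (fun S : E →L[𝕜] E => re (inner 𝕜 (S x) x)) hT
    simpa [sum_inner, star_eq_adjoint, adjoint_inner_left, ← norm_sq_eq_re_inner] using this
  refine opNorm_le_of_re_inner_le zero_le_one fun x y hx hy => ?_
  calc re (inner 𝕜 ((∑ i, star (T i) * c * T i) x) y)
      = ∑ i, re (inner 𝕜 (c (T i x)) (T i y)) := by
        simp [sum_inner, star_eq_adjoint, adjoint_inner_left]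
    _ ≤ ∑ i, ‖T i x‖ * ‖T i y‖ := by
        gcongr with i
        exact (re_inner_le_norm _ _).trans (mul_le_mul_of_nonneg_right
          (c.le_of_opNorm_le hc _ |>.trans_eq (one_mul _)) (norm_nonneg _))
    _ ≤ √(∑ i, ‖T i x‖ ^ 2) * √(∑ i, ‖T i y‖ ^ 2) := Real.sum_mul_le_sqrt_mul_sqrt _ _ _
    _ = 1 := by simp [norm_sq_sum, hx, hy]

namespace Matrix

section Norms

variable {𝕜 m n : Type*} [RCLike 𝕜] [Fintype m]

lemma norm_toLp_col_sq (B : Matrix m n 𝕜) (j : n) :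
    ‖toLp 2 (Bᵀ j)‖ ^ 2 = RCLike.re ((Bᴴ * B) j j) := by
  simp [EuclideanSpace.norm_sq_eq, mul_apply, RCLike.conj_mul]

lemma norm_trace_mul_le [Fintype n] [DecidableEq n] (C : Matrix m n 𝕜)
    (B : Matrix n m 𝕜) : ‖trace (C * B)‖ ≤ ‖C‖ * ∑ j, ‖toLp 2 (Bᵀ j)‖ := by
  rw [Finset.mul_sum]
  refine (norm_sum_le _ _).trans (Finset.sum_le_sum fun j _ => ?_)
  calc ‖(C * B) j j‖ = ‖toLp 2 (C *ᵥ Bᵀ j) j‖ := by simp [mul_apply, mulVec, dotProduct]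
    _ ≤ ‖toLp 2 (C *ᵥ Bᵀ j)‖ := PiLp.norm_apply_le _ _
    _ ≤ ‖C‖ * ‖toLp 2 (Bᵀ j)‖ := l2_opNorm_mulVec C _

lemma norm_sum_conjTranspose_mul_mul_le_one {ι : Type*} [Fintype n] [DecidableEq n] [Fintype ι]
    (K : ι → Matrix n n 𝕜) (hK : ∑ i, (K i)ᴴ * K i = 1) {C : Matrix n n 𝕜} (hC : ‖C‖ ≤ 1) :
    ‖∑ i, (K i)ᴴ * C * K i‖ ≤ 1 := by
  have hK' := congrArg (toEuclideanCLM (n := n) (𝕜 := 𝕜)) hK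
  simp only [map_sum, map_mul, ← star_eq_conjTranspose, map_star, map_one] at hK'
  rw [cstar_norm_def] at hC ⊢
  simp only [map_sum, map_mul, ← star_eq_conjTranspose, map_star]
  exact ContinuousLinearMap.norm_sum_star_mul_mul_le_one _ hK' hC

end Norms

lemma trace_mul_sum_mul_mul {R n ι : Type*} [CommSemiring R] [Fintype n] [Fintype ι]
    (W X : Matrix n n R) (K L : ι → Matrix n n R) :
    trace (W * ∑ i, K i * X * L i) = trace ((∑ i, L i * W * K i) * X) := by
  simp only [Finset.mul_sum, Finset.sum_mul, trace_sum]
  refine Finset.sum_congr rfl fun i _ => ?_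
  rw [Matrix.mul_assoc (L i), Matrix.mul_assoc (L i), ← Matrix.mul_assoc W, trace_mul_comm (L i)]
  simp only [Matrix.mul_assoc]

section SingularValues

variable {n : Type*} [Fintype n] [DecidableEq n] (A : Matrix n n ℂ)

noncomputable abbrev rightSingularVectors : Matrix n n ℂ :=
  (isHermitian_conjTranspose_mul_self A).eigenvectorUnitary

noncomputable def singularValues (j : n) : ℝ :=
  √((isHermitian_conjTranspose_mul_self A).eigenvalues j)

lemma singularValues_nonneg (j : n) : 0 ≤ A.singularValues j := Real.sqrt_nonneg _

lemma conjTranspose_mul_self_mul_rightSingularVectors :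
    (A * A.rightSingularVectors)ᴴ * (A * A.rightSingularVectors) =
      diagonal (fun j => (A.singularValues j : ℂ) ^ 2) := by
  have h := (isHermitian_conjTranspose_mul_self A).conjStarAlgAut_star_eigenvectorUnitary
  rw [Unitary.conjStarAlgAut_star_apply] at h
  rw [conjTranspose_mul, ← star_eq_conjTranspose, Matrix.mul_assoc, ← Matrix.mul_assoc Aᴴ,
    ← Matrix.mul_assoc, h]
  congr 1
  ext j
  simp [singularValues, ← Complex.ofReal_pow,
    Real.sq_sqrt ((posSemidef_conjTranspose_mul_self A).eigenvalues_nonneg j)]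

lemma norm_toLp_col_mul_rightSingularVectors (j : n) :
    ‖toLp 2 ((A * A.rightSingularVectors)ᵀ j)‖ = A.singularValues j := by
  rw [← sq_eq_sq₀ (norm_nonneg _) (A.singularValues_nonneg j), norm_toLp_col_sq,
    conjTranspose_mul_self_mul_rightSingularVectors]
  simp [← Complex.ofReal_pow]

end SingularValues

end Matrix

section TraceNorm

variable {n : Type*} [Fintype n] [DecidableEq n] (A : Matrix n n ℂ)

lemma traceNorm_eq_sum_singularValues : traceNorm A = ∑ j, A.singularValues j := by
  rw [traceNorm, trace_mul_comm, ← Matrix.mul_assoc, Unitary.coe_star_mul_self, Matrix.one_mul,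
    trace_diagonal, Complex.re_sum]
  rfl

lemma traceNorm_nonneg : 0 ≤ traceNorm A := by
  rw [traceNorm_eq_sum_singularValues]
  exact Finset.sum_nonneg fun j _ => A.singularValues_nonneg j

lemma re_trace_mul_le_traceNorm {C : Matrix n n ℂ} (hC : ‖C‖ ≤ 1) :
    (trace (C * A)).re ≤ traceNorm A := by
  have hV : A.rightSingularVectors * star A.rightSingularVectors = 1 :=
    Unitary.coe_mul_star_self _
  have hVu : star A.rightSingularVectors ∈ unitary (Matrix n n ℂ) :=
    Unitary.star_mem (Subtype.prop _)
  calc (trace (C * A)).re ≤ ‖trace (C * A)‖ := Complex.re_le_norm _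
    _ = ‖trace ((star A.rightSingularVectors * C) * (A * A.rightSingularVectors))‖ := by
      rw [← Matrix.mul_assoc, trace_mul_comm _ A.rightSingularVectors, ← Matrix.mul_assoc,
        ← Matrix.mul_assoc, hV, Matrix.one_mul]
    _ ≤ ‖star A.rightSingularVectors * C‖ * traceNorm A := by
      simpa only [norm_toLp_col_mul_rightSingularVectors, ← traceNorm_eq_sum_singularValues]
        using norm_trace_mul_le (star A.rightSingularVectors * C) (A * A.rightSingularVectors)
    _ ≤ traceNorm A := by
      rw [CStarRing.norm_mem_unitary_mul C hVu]
      exact mul_le_of_le_one_left (traceNorm_nonneg A) hC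

lemma exists_norm_le_one_re_trace_mul_eq_traceNorm :
    ∃ W : Matrix n n ℂ, ‖W‖ ≤ 1 ∧ (trace (W * A)).re = traceNorm A := by
  set D : Matrix n n ℂ := diagonal (fun j => ((A.singularValues j)⁻¹ : ℝ))
  have hD : Dᴴ = D := by simp [D]
  have hVu : A.rightSingularVectors ∈ unitary (Matrix n n ℂ) := Subtype.prop _
  have hYY : (A * A.rightSingularVectors * D)ᴴ * (A * A.rightSingularVectors * D) =
      diagonal (fun j => ((((A.singularValues j)⁻¹ * A.singularValues j) ^ 2 : ℝ) : ℂ)) := by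
    rw [conjTranspose_mul, hD, Matrix.mul_assoc, ← Matrix.mul_assoc _ (A * _),
      conjTranspose_mul_self_mul_rightSingularVectors]
    simp only [D, diagonal_mul_diagonal]
    congr 1
    ext j
    push_cast
    ring
  refine ⟨A.rightSingularVectors * (A * A.rightSingularVectors * D)ᴴ, ?_, ?_⟩
  · rw [CStarRing.norm_mem_unitary_mul _ hVu, l2_opNorm_conjTranspose]
    refine (mul_self_le_mul_self_iff (norm_nonneg _) zero_le_one).2 ?_
    rw [one_mul, ← l2_opNorm_conjTranspose_mul_self, hYY, l2_opNorm_diagonal]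
    refine (pi_norm_le_iff_of_nonneg zero_le_one).2 fun j => ?_
    by_cases h : A.singularValues j = 0 <;> simp [h]
  · rw [trace_mul_cycle, trace_mul_comm (A * _), conjTranspose_mul, hD, Matrix.mul_assoc,
      conjTranspose_mul_self_mul_rightSingularVectors, diagonal_mul_diagonal, trace_diagonal,
      Complex.re_sum, traceNorm_eq_sum_singularValues]
    refine Finset.sum_congr rfl fun j _ => ?_
    rw [← Complex.ofReal_pow, ← Complex.ofReal_mul, Complex.ofReal_re, sq, ← mul_assoc,
      inv_mul_mul_self]

end TraceNorm

/-- A quantum channel `M(X) = ∑ i, Kᵢ X Kᵢᴴ` with `∑ i, Kᵢᴴ Kᵢ = 1` is a contraction for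
the trace norm: `‖M(X)‖₁ ≤ ‖X‖₁` for every matrix `X`. -/
theorem traceNorm_channel_le {d m : ℕ} (K : Fin m → Matrix (Fin d) (Fin d) ℂ)
    (hK : ∑ i, (K i)ᴴ * K i = 1)
    (X : Matrix (Fin d) (Fin d) ℂ) :
    traceNorm (∑ i, K i * X * (K i)ᴴ) ≤ traceNorm X := by
  obtain ⟨W, hW, hW_trace⟩ :=
    exists_norm_le_one_re_trace_mul_eq_traceNorm (∑ i, K i * X * (K i)ᴴ)
  rw [← hW_trace, trace_mul_sum_mul_mul]
  exact re_trace_mul_le_traceNorm X (norm_sum_conjTranspose_mul_mul_le_one K hK hW)
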